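/- arXiv:1708.04197 — 6 statements merged into one kernel-verified Lean document; each statement's English description precedes it below -/
import Mathlib

section
/- Let F_q be a finite field with q elements, A = F_q[T], K_∞ = F_q((1/T)) with |T| = q, and C_∞ the completed algebraic closure of K_∞. If Λ ⊂ C_∞ is a discrete F_q-subspace with successive minimum basis λ_1, λ_2, ..., then for any finitely many scalars a_1, a_2, ... ∈ F_q (almost all zero), |∑ a_i λ_i| = max{|λ_i| : a_i ≠ 0}. -/
/-- A discrete `Fq`-subspace of `C`: its intersection with any bounded ball is finite. -/
def IsDiscreteSubspace (Fq C : Type) [Field Fq] [Fintype Fq] [NormedField C]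
    [Algebra Fq C] (Λ : Submodule Fq C) : Prop :=
  ∀ r : ℝ, {x : C | x ∈ Λ ∧ ‖x‖ ≤ r}.Finite

/-- `l` is a successive minimum basis (SMB) of `Λ`, the index set being linearly
ordered by `ord`: it is a basis of `Λ`, and each `l i` has minimal absolute value among
elements of `Λ` not in the span of the previous basis vectors. -/
def IsSMB (Fq C : Type) [Field Fq] [Fintype Fq] [NormedField C] [Algebra Fq C]
    {ι : Type} (ord : LinearOrder ι) (Λ : Submodule Fq C) (l : ι → C) : Prop :=
  (∀ i, l i ∈ Λ) ∧ LinearIndependent Fq l ∧ Submodule.span Fq (Set.range l) = Λ ∧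
    ∀ i, ∀ x ∈ Λ, x ∉ Submodule.span Fq (l '' {j | ord.lt j i}) → ‖l i‖ ≤ ‖x‖

/-- The image of a nonzero element of a finite field under an algebra map has norm 1. -/
lemma norm_algebraMap_eq_one (Fq C : Type) [Field Fq] [Fintype Fq] [NormedField C]
    [Algebra Fq C] {c : Fq} (hc : c ≠ 0) : ‖algebraMap Fq C c‖ = 1 := by
  have hpow : c ^ (Fintype.card Fq - 1) = 1 := FiniteField.pow_card_sub_one_eq_one c hc
  have h : ‖algebraMap Fq C c‖ ^ (Fintype.card Fq - 1) = 1 := by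
    rw [← norm_pow, ← map_pow, hpow, map_one, norm_one]
  have hn : Fintype.card Fq - 1 ≠ 0 := by
    have := Fintype.one_lt_card (α := Fq)
    omega
  have h0 : (0 : ℝ) ≤ ‖algebraMap Fq C c‖ := norm_nonneg _
  rcases lt_trichotomy ‖algebraMap Fq C c‖ 1 with hlt | heq | hgt
  · have := pow_lt_one₀ h0 hlt hn
    linarith
  · exact heq
  · have := one_lt_pow₀ hgt hn
    linarith

/-- For a successive minimum basis `l` of a discrete `F_q`-subspace `Λ` of `C_∞`,
`‖∑ aᵢ • lᵢ‖ = max {‖lᵢ‖ : aᵢ ≠ 0}` for any finitely supported scalars, not all zero. -/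
theorem smb_norm_sum_eq_sup (Fq C : Type) [Field Fq] [Fintype Fq] [NormedField C]
    [Algebra Fq C] [IsUltrametricDist C]
    (Λ : Submodule Fq C) (hΛ : IsDiscreteSubspace Fq C Λ)
    {ι : Type} (ord : LinearOrder ι) (l : ι → C) (hl : IsSMB Fq C ord Λ l)
    (a : ι →₀ Fq) (ha : a ≠ 0) :
    ‖a.sum fun i c => c • l i‖ =
      a.support.sup' (Finsupp.support_nonempty_iff.mpr ha) fun i => ‖l i‖ := by
  letI := ord
  obtain ⟨hmem, hli, hspan, hmin⟩ := hl
  have hne : a.support.Nonempty := Finsupp.support_nonempty_iff.mpr ha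
  -- norms of l are monotone
  have hmono : ∀ i j : ι, i ≤ j → ‖l i‖ ≤ ‖l j‖ := by
    intro i j hij
    rcases eq_or_lt_of_le hij with rfl | hij
    · exact le_refl _
    refine hmin i (l j) (hmem j) fun hsp => ?_
    have : l j ∈ Submodule.span Fq (l '' {k | k < j}) := by
      refine Submodule.span_mono (Set.image_mono ?_) hsp
      intro k hk
      exact lt_trans hk hij
    exact hli.notMem_span_image (by simp) this
  set i₀ := a.support.max' hne with hi₀
  have hi₀mem : i₀ ∈ a.support := a.support.max'_mem hne
  -- the sup equals ‖l i₀‖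
  have hsup : (a.support.sup' hne fun i => ‖l i‖) = ‖l i₀‖ := by
    apply le_antisymm
    · exact Finset.sup'_le _ _ fun i hi => hmono i i₀ (Finset.le_max' _ _ hi)
    · exact Finset.le_sup' (fun i => ‖l i‖) hi₀mem
  rw [hsup]
  have hnorm_smul : ∀ i ∈ a.support, ‖a i • l i‖ = ‖l i‖ := by
    intro i hi
    rw [Algebra.smul_def, norm_mul, norm_algebraMap_eq_one Fq C (Finsupp.mem_support_iff.mp hi),
      one_mul]
  apply le_antisymm
  · rw [Finsupp.sum]
    refine le_trans (hne.norm_sum_le_sup'_norm _) ?_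
    rw [Finset.sup'_le_iff]
    intro i hi
    rw [hnorm_smul i hi]
    exact hmono i i₀ (Finset.le_max' _ _ hi)
  · -- x := the sum is in Λ and not in the span of earlier basis vectors
    set x := a.sum fun i c => c • l i with hx
    have hxΛ : x ∈ Λ := by
      rw [hx, Finsupp.sum]
      exact Submodule.sum_mem _ fun i _ => Submodule.smul_mem _ _ (hmem i)
    refine hmin i₀ x hxΛ fun hsp => ?_
    rw [Finsupp.mem_span_image_iff_linearCombination] at hsp
    obtain ⟨b, hb, hbx⟩ := hsp
    have hxa : Finsupp.linearCombination Fq l a = x := by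
      simp [Finsupp.linearCombination_apply, hx]
    have hba : b = a := by
      have : Finsupp.linearCombination Fq l (b - a) = 0 := by
        rw [map_sub, hbx, hxa, sub_self]
      have := linearIndependent_iff.mp hli _ this
      exact sub_eq_zero.mp this
    subst hba
    have : i₀ ∈ {j | j < i₀} := hb hi₀mem
    exact lt_irrefl i₀ this
end

section
/- Every discrete F_q-subspace Λ of C_∞ possesses a successive minimum basis. -/
section SMBAux

variable (Fq C : Type) [Field Fq] [Fintype Fq] [NormedField C] [Algebra Fq C]

/-- In a discrete subspace, every nonempty subset has an element of minimal norm. -/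
lemma exists_min_norm (Λ : Submodule Fq C) (hΛ : IsDiscreteSubspace Fq C Λ)
    (S : Set C) (hS : S ⊆ (Λ : Set C)) (hne : S.Nonempty) :
    ∃ m ∈ S, ∀ x ∈ S, ‖m‖ ≤ ‖x‖ := by
  obtain ⟨x₀, hx₀⟩ := hne
  have hfin : {x ∈ S | ‖x‖ ≤ ‖x₀‖}.Finite :=
    (hΛ ‖x₀‖).subset (fun x hx => ⟨hS hx.1, hx.2⟩)
  obtain ⟨m, hm, hmin⟩ := Set.exists_min_image _ (fun x => ‖x‖) hfin ⟨x₀, hx₀, le_refl _⟩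
  refine ⟨m, hm.1, fun x hx => ?_⟩
  by_cases h : ‖x‖ ≤ ‖x₀‖
  · exact hmin x ⟨hx, h⟩
  · exact le_trans (hmin x₀ ⟨hx₀, le_refl _⟩) (le_of_not_ge h)

open Classical in
/-- Pick an element of minimal norm in `Λ \ W`, or `0` if there is none. -/
noncomputable def pick (Λ : Submodule Fq C) (hΛ : IsDiscreteSubspace Fq C Λ)
    (W : Submodule Fq C) : C :=
  if h : {x : C | x ∈ Λ ∧ x ∉ W}.Nonempty then
    (exists_min_norm Fq C Λ hΛ _ (fun x hx => hx.1) h).choose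
  else 0

open Classical in
lemma pick_spec (Λ : Submodule Fq C) (hΛ : IsDiscreteSubspace Fq C Λ)
    (W : Submodule Fq C) (h : {x : C | x ∈ Λ ∧ x ∉ W}.Nonempty) :
    pick Fq C Λ hΛ W ∈ Λ ∧ pick Fq C Λ hΛ W ∉ W ∧
      ∀ x ∈ Λ, x ∉ W → ‖pick Fq C Λ hΛ W‖ ≤ ‖x‖ := by
  rw [pick, dif_pos h]
  obtain ⟨hm, hmin⟩ := (exists_min_norm Fq C Λ hΛ _ (fun x hx => hx.1) h).choose_spec
  exact ⟨hm.1, hm.2, fun x hx hxW => hmin x ⟨hx, hxW⟩⟩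

open Classical in
lemma pick_eq_zero (Λ : Submodule Fq C) (hΛ : IsDiscreteSubspace Fq C Λ)
    (W : Submodule Fq C) (h : ¬ {x : C | x ∈ Λ ∧ x ∉ W}.Nonempty) :
    pick Fq C Λ hΛ W = 0 := by
  rw [pick, dif_neg h]

/-- The successive-minimum sequence. -/
noncomputable def smbSeq (Λ : Submodule Fq C) (hΛ : IsDiscreteSubspace Fq C Λ) : ℕ → C
  | n => pick Fq C Λ hΛ
      (Submodule.span Fq (Set.range fun m : Fin n => smbSeq Λ hΛ m.val))
  decreasing_by exact m.isLt

lemma smbSeq_def (Λ : Submodule Fq C) (hΛ : IsDiscreteSubspace Fq C Λ) (n : ℕ) :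
    smbSeq Fq C Λ hΛ n =
      pick Fq C Λ hΛ (Submodule.span Fq (smbSeq Fq C Λ hΛ '' Set.Iio n)) := by
  rw [smbSeq]
  congr 1
  congr 1
  ext x
  simp only [Set.mem_range, Set.mem_image, Set.mem_Iio]
  exact ⟨fun ⟨m, hm⟩ => ⟨m.val, m.isLt, hm⟩, fun ⟨m, hm, he⟩ => ⟨⟨m, hm⟩, he⟩⟩

end SMBAux

section SMBMain

variable (Fq C : Type) [Field Fq] [Fintype Fq] [NormedField C] [Algebra Fq C]
variable (Λ : Submodule Fq C) (hΛ : IsDiscreteSubspace Fq C Λ)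

local notation "f" => smbSeq Fq C Λ hΛ
local notation "W" n => Submodule.span Fq (smbSeq Fq C Λ hΛ '' Set.Iio n)

lemma smbSeq_mem (n : ℕ) : f n ∈ Λ := by
  rw [smbSeq_def]
  by_cases h : {x : C | x ∈ Λ ∧ x ∉ (W n)}.Nonempty
  · exact (pick_spec Fq C Λ hΛ _ h).1
  · rw [pick_eq_zero Fq C Λ hΛ _ h]; exact Λ.zero_mem

lemma smbSeq_nonempty_of_ne_zero {n : ℕ} (h : f n ≠ 0) :
    {x : C | x ∈ Λ ∧ x ∉ (W n)}.Nonempty := by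
  by_contra hc
  exact h (by rw [smbSeq_def, pick_eq_zero Fq C Λ hΛ _ hc])

lemma smbSeq_not_mem {n : ℕ} (h : f n ≠ 0) : f n ∉ (W n) := by
  have := pick_spec Fq C Λ hΛ _ (smbSeq_nonempty_of_ne_zero Fq C Λ hΛ h)
  rw [smbSeq_def]
  exact this.2.1

lemma smbSeq_min {n : ℕ} (h : f n ≠ 0) :
    ∀ x ∈ Λ, x ∉ (W n) → ‖f n‖ ≤ ‖x‖ := by
  have := pick_spec Fq C Λ hΛ _ (smbSeq_nonempty_of_ne_zero Fq C Λ hΛ h)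
  rw [smbSeq_def]
  exact this.2.2

lemma smbSeq_ne_zero_of_nonempty {n : ℕ}
    (h : {x : C | x ∈ Λ ∧ x ∉ (W n)}.Nonempty) : f n ≠ 0 := by
  intro h0
  have := pick_spec Fq C Λ hΛ _ h
  rw [← smbSeq_def] at this
  exact this.2.1 (h0 ▸ Submodule.zero_mem _)

lemma smbSeq_support_dc {m n : ℕ} (hmn : m < n) (h : f n ≠ 0) : f m ≠ 0 := by
  intro hm
  have hsub : (W m) ≤ (W n) :=
    Submodule.span_mono (Set.image_mono (Set.Iio_subset_Iio hmn.le))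
  have hΛle : ∀ x ∈ Λ, x ∈ (W m) := by
    intro x hx
    by_contra hxW
    exact (smbSeq_ne_zero_of_nonempty Fq C Λ hΛ ⟨x, hx, hxW⟩) hm
  apply h
  rw [smbSeq_def, pick_eq_zero]
  rintro ⟨x, hx, hxW⟩
  exact hxW (hsub (hΛle x hx))

lemma smbSeq_span : Λ ≤ Submodule.span Fq (Set.range f) := by
  intro x hx
  by_contra hxs
  -- at every stage the choice set is nonempty, and all chosen elements have norm ≤ ‖x‖
  have hW : ∀ n : ℕ, (W n) ≤ Submodule.span Fq (Set.range f) :=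
    fun n => Submodule.span_mono (Set.image_subset_range _ _)
  have hne : ∀ n : ℕ, f n ≠ 0 := fun n =>
    smbSeq_ne_zero_of_nonempty Fq C Λ hΛ ⟨x, hx, fun hc => hxs (hW n hc)⟩
  have hnorm : ∀ n : ℕ, ‖f n‖ ≤ ‖x‖ :=
    fun n => smbSeq_min Fq C Λ hΛ (hne n) x hx (fun hc => hxs (hW n hc))
  have hinj : Function.Injective f := by
    intro m n hmn
    by_contra hne'
    rcases lt_or_gt_of_ne hne' with h | h
    · exact smbSeq_not_mem Fq C Λ hΛ (hne n)
        (hmn ▸ Submodule.subset_span ⟨m, h, rfl⟩)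
    · exact smbSeq_not_mem Fq C Λ hΛ (hne m)
        (hmn ▸ Submodule.subset_span ⟨n, h, rfl⟩)
  have : (Set.range f).Infinite := Set.infinite_range_of_injective hinj
  exact this ((hΛ ‖x‖).subset (by rintro y ⟨n, rfl⟩; exact ⟨smbSeq_mem Fq C Λ hΛ n, hnorm n⟩))

end SMBMain

/-- Every discrete `F_q`-subspace `Λ` of `C_∞` possesses a successive minimum basis. -/
theorem exists_smb (Fq C : Type) [Field Fq] [Fintype Fq] [NormedField C]
    [Algebra Fq C] [IsUltrametricDist C]
    (Λ : Submodule Fq C) (hΛ : IsDiscreteSubspace Fq C Λ) :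
    ∃ (ι : Type) (ord : LinearOrder ι) (l : ι → C), IsSMB Fq C ord Λ l := by
  classical
  set f := smbSeq Fq C Λ hΛ with hf
  let ι := {n : ℕ // f n ≠ 0}
  let l : ι → C := fun i => f i.val
  have himg : ∀ i : ι, l '' {j : ι | j < i} = f '' Set.Iio i.val := by
    intro i
    ext x
    constructor
    · rintro ⟨j, hj, rfl⟩
      exact ⟨j.val, Set.mem_Iio.2 (Subtype.coe_lt_coe.2 hj), rfl⟩
    · rintro ⟨m, hm, rfl⟩
      exact ⟨⟨m, smbSeq_support_dc Fq C Λ hΛ hm i.2⟩, by exact hm, rfl⟩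
  refine ⟨ι, inferInstance, l, ?_, ?_, ?_, ?_⟩
  · exact fun i => smbSeq_mem Fq C Λ hΛ i.val
  · -- linear independence
    rw [linearIndependent_iff']
    intro s g hsum i hi
    by_contra hgi
    set t := s.filter (fun k => g k ≠ 0) with ht
    have hit : i ∈ t := Finset.mem_filter.2 ⟨hi, hgi⟩
    have htne : t.Nonempty := ⟨i, hit⟩
    set j := t.max' htne with hj
    have hjt : j ∈ t := t.max'_mem htne
    have hsum_t : ∑ k ∈ t, g k • l k = 0 := by
      rw [← hsum]
      exact Finset.sum_subset (Finset.filter_subset _ _)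
        (fun k hk hkt => by
          have : g k = 0 := by
            by_contra hg
            exact hkt (Finset.mem_filter.2 ⟨hk, hg⟩)
          rw [this, zero_smul])
    have hmem : g j • l j ∈ Submodule.span Fq (l '' {k : ι | k < j}) := by
      have heq : g j • l j = -∑ k ∈ t.erase j, g k • l k := by
        rw [eq_neg_iff_add_eq_zero, ← Finset.add_sum_erase t _ hjt] at *
        exact hsum_t
      rw [heq]
      refine Submodule.neg_mem _ (Submodule.sum_mem _ fun k hk => ?_)
      have hkj : k < j :=
        lt_of_le_of_ne (t.le_max' k (Finset.mem_of_mem_erase hk))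
          (Finset.ne_of_mem_erase hk)
      exact Submodule.smul_mem _ _ (Submodule.subset_span ⟨k, hkj, rfl⟩)
    have hgj : g j ≠ 0 := (Finset.mem_filter.1 hjt).2
    have hlj : l j ∈ Submodule.span Fq (l '' {k : ι | k < j}) := by
      have := Submodule.smul_mem _ (g j)⁻¹ hmem
      rwa [inv_smul_smul₀ hgj] at this
    rw [himg j] at hlj
    exact smbSeq_not_mem Fq C Λ hΛ j.2 hlj
  · -- span
    apply le_antisymm
    · rw [Submodule.span_le]
      rintro _ ⟨i, rfl⟩
      exact smbSeq_mem Fq C Λ hΛ i.val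
    · refine le_trans (smbSeq_span Fq C Λ hΛ) ?_
      rw [Submodule.span_le]
      rintro _ ⟨n, rfl⟩
      by_cases h : f n = 0
      · show f n ∈ _
        rw [h]; exact Submodule.zero_mem _
      · exact Submodule.subset_span ⟨⟨n, h⟩, rfl⟩
  · -- minimality
    intro i x hx hxW
    rw [show {j : ι | (inferInstance : LinearOrder ι).lt j i} = {j : ι | j < i} from rfl,
      himg i] at hxW
    exact smbSeq_min Fq C Λ hΛ i.2 x hx hxW
end

section
/- Let Λ be a finite-dimensional F_q-subspace of C_∞ with successive minimum basis {λ_1, ..., λ_n}, and let e_Λ(X) = X·∏_{0≠λ∈Λ}(1 − X/λ) = ∑_{i=0}^{n} α_i(Λ) X^{q^i} be its exponential (Moore) polynomial. If α_k(Λ) = 0 for some k < n, then Λ is k-inseparable, i.e., |λ_k| = |λ_{k+1}|. -/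
/-- The (finite) `F_q`-lattice spanned by `l 0, …, l (n-1)`, as a finite set. -/
noncomputable def latticeFinset (Fq C : Type) [Field Fq] [Fintype Fq] [NormedField C]
    [Algebra Fq C] {n : ℕ} (l : Fin n → C) : Finset C := by
  classical exact Finset.image (fun a : Fin n → Fq => ∑ i, a i • l i) Finset.univ

/-- The exponential polynomial `e_Λ(X) = X·∏_{0≠λ∈Λ}(1 − X/λ)` of the finite lattice
spanned by `l`. -/
noncomputable def ePoly (Fq C : Type) [Field Fq] [Fintype Fq] [NormedField C]
    [Algebra Fq C] {n : ℕ} (l : Fin n → C) : Polynomial C := by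
  classical exact Polynomial.X *
    ∏ v ∈ (latticeFinset Fq C l).erase 0, (1 - Polynomial.C v⁻¹ * Polynomial.X)

/-- `α_k(Λ)`: the coefficient of `X^{q^k}` in the exponential polynomial. -/
noncomputable def eCoeff (Fq C : Type) [Field Fq] [Fintype Fq] [NormedField C]
    [Algebra Fq C] {n : ℕ} (l : Fin n → C) (k : ℕ) : C :=
  (ePoly Fq C l).coeff ((Fintype.card Fq) ^ k)

open Polynomial Finset

lemma aux_coeff_prod {R : Type} [CommRing R] [DecidableEq R] (s : Finset R) (c : R → R) (m : ℕ) :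
    (∏ v ∈ s, (Polynomial.C (c v) * Polynomial.X + 1)).coeff m
      = ∑ t ∈ s.powersetCard m, ∏ v ∈ t, c v := by
  rw [Finset.prod_add]
  simp only [Finset.prod_const_one, mul_one]
  have h1 : ∀ t : Finset R, ∏ v ∈ t, (Polynomial.C (c v) * Polynomial.X)
      = Polynomial.C (∏ v ∈ t, c v) * Polynomial.X ^ t.card := by
    intro t
    rw [Finset.prod_mul_distrib, map_prod, Finset.prod_const]
  rw [Polynomial.finset_sum_coeff]
  simp only [h1, Polynomial.coeff_C_mul, Polynomial.coeff_X_pow]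
  rw [Finset.powersetCard_eq_filter, Finset.sum_filter]
  apply Finset.sum_congr rfl
  intro t _
  by_cases h : t.card = m
  · simp [h]
  · simp [h, Ne.symm h]

open Classical in
lemma aux_eCoeff (Fq C : Type) [Field Fq] [Fintype Fq] [NormedField C]
    [Algebra Fq C] {n : ℕ} (l : Fin n → C) (k : ℕ) :
    eCoeff Fq C l k = ∑ t ∈ ((latticeFinset Fq C l).erase 0).powersetCard
      (Fintype.card Fq ^ k - 1), ∏ v ∈ t, (-v⁻¹) := by
  have hq : 1 ≤ Fintype.card Fq ^ k := Nat.one_le_pow _ _ Fintype.card_pos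
  have hfac : ∀ v : C, (1 - Polynomial.C v⁻¹ * Polynomial.X : Polynomial C)
      = Polynomial.C (-v⁻¹) * Polynomial.X + 1 := by
    intro v; rw [map_neg]; ring
  rw [eCoeff, ePoly]
  rw [show Fintype.card Fq ^ k = (Fintype.card Fq ^ k - 1) + 1 by omega,
    Polynomial.coeff_X_mul]
  rw [Finset.prod_congr rfl fun v _ => hfac v, aux_coeff_prod, Nat.add_sub_cancel]

/-- If `α_k(Λ) = 0` for some `k < n = dim Λ`, then `Λ` is `k`-inseparable, i.e. the
`k`-th and `(k+1)`-st successive minima coincide (1-indexed: `l ⟨k-1⟩`, `l ⟨k⟩`). -/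
theorem k_inseparable_of_eCoeff_eq_zero (Fq C : Type) [Field Fq] [Fintype Fq]
    [NormedField C] [Algebra Fq C] [IsUltrametricDist C]
    {n : ℕ} (l : Fin n → C)
    (hl : IsSMB Fq C inferInstance (Submodule.span Fq (Set.range l)) l)
    (k : ℕ) (hk1 : 1 ≤ k) (hkn : k < n)
    (h0 : eCoeff Fq C l k = 0) :
    ‖l ⟨k - 1, by omega⟩‖ = ‖l ⟨k, hkn⟩‖ := by
  classical
  obtain ⟨hmem, hli, hspan, hmin⟩ := hl
  have hklt : k ≤ n := hkn.le
  set q := Fintype.card Fq with hqdef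
  set kk : Fin n := ⟨k, hkn⟩ with hkk
  set ka : Fin n := ⟨k - 1, by omega⟩ with hka
  set S : Finset C := latticeFinset Fq C l with hS
  set S' : Finset C := S.erase 0 with hS'
  set m : ℕ := q ^ k - 1 with hm
  -- membership in S is membership in the span
  have hSmem : ∀ x : C, x ∈ S ↔ x ∈ Submodule.span Fq (Set.range l) := by
    intro x
    rw [Submodule.mem_span_range_iff_exists_fun]
    constructor
    · intro hx
      obtain ⟨a, -, ha⟩ := Finset.mem_image.1 hx
      exact ⟨a, ha⟩
    · rintro ⟨c, hc⟩
      exact Finset.mem_image.2 ⟨c, Finset.mem_univ _, hc⟩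
  -- the sub-lattice spanned by the first k vectors
  set ψ : (Fin k → Fq) → C := fun a => ∑ i, a i • l (Fin.castLE hklt i) with hψ
  set Λk : Finset C := Finset.image ψ Finset.univ with hΛk
  have himage : l '' {j : Fin n | j < kk} = Set.range (fun i : Fin k => l (Fin.castLE hklt i)) := by
    ext x
    constructor
    · rintro ⟨j, hj, rfl⟩
      have hj' : (j : ℕ) < k := hj
      exact ⟨⟨j, hj'⟩, by congr 1⟩
    · rintro ⟨i, rfl⟩
      exact ⟨Fin.castLE hklt i, Fin.lt_def.2 i.2, rfl⟩
  have hΛkmem : ∀ x : C,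
      x ∈ Λk ↔ x ∈ Submodule.span Fq (l '' {j : Fin n | j < kk}) := by
    intro x
    rw [himage, Submodule.mem_span_range_iff_exists_fun]
    constructor
    · intro hx
      obtain ⟨a, -, ha⟩ := Finset.mem_image.1 hx
      exact ⟨a, ha⟩
    · rintro ⟨c, hc⟩
      exact Finset.mem_image.2 ⟨c, Finset.mem_univ _, hc⟩
  have hΛkS : Λk ⊆ S := by
    intro x hx
    rw [hSmem]
    refine Submodule.span_mono ?_ ((hΛkmem x).1 hx)
    exact (Set.image_subset_range l _)
  -- injectivity and cardinality
  have hliK : LinearIndependent Fq (fun i : Fin k => l (Fin.castLE hklt i)) :=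
    hli.comp (Fin.castLE hklt) (Fin.castLE_injective hklt)
  have hψinj : Function.Injective ψ := by
    intro a b hab
    have h1 : ∑ i, (a - b) i • l (Fin.castLE hklt i) = 0 := by
      simp only [Pi.sub_apply, sub_smul, Finset.sum_sub_distrib]
      simpa [hψ, sub_eq_zero] using hab
    have h2 := Fintype.linearIndependent_iff.1 hliK (a - b) h1
    funext i
    have := h2 i
    simpa [sub_eq_zero] using this
  have hcardΛk : Λk.card = q ^ k := by
    rw [hΛk, Finset.card_image_of_injective _ hψinj, Finset.card_univ,
      Fintype.card_fun, Fintype.card_fin]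
  have h0Λk : (0 : C) ∈ Λk := Finset.mem_image.2 ⟨0, Finset.mem_univ _, by simp [hψ]⟩
  -- norm facts
  have hnorm1 : ∀ a : Fq, a ≠ 0 → ‖algebraMap Fq C a‖ = 1 := by
    intro a ha
    have hq2 : 1 < Fintype.card Fq := Fintype.one_lt_card
    have h1 : (algebraMap Fq C a) ^ (Fintype.card Fq - 1) = 1 := by
      rw [← map_pow, FiniteField.pow_card_sub_one_eq_one a ha, map_one]
    have h2 : ‖algebraMap Fq C a‖ ^ (Fintype.card Fq - 1) = 1 := by
      rw [← norm_pow, h1, norm_one]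
    have h3 : Fintype.card Fq - 1 ≠ 0 := by omega
    rcases lt_trichotomy ‖algebraMap Fq C a‖ 1 with h | h | h
    · exact absurd h2 (by have := pow_lt_one₀ (norm_nonneg _) h h3; linarith)
    · exact h
    · exact absurd h2 (by have := one_lt_pow₀ h h3; linarith)
  have hsmul : ∀ (a : Fq) (x : C), ‖a • x‖ ≤ ‖x‖ := by
    intro a x
    rcases eq_or_ne a 0 with rfl | ha
    · simp
    · rw [Algebra.smul_def, norm_mul, hnorm1 a ha, one_mul]
  have hmono : ∀ i j : Fin n, i ≤ j → ‖l i‖ ≤ ‖l j‖ := by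
    intro i j hij
    refine hmin i (l j) (hmem j) ?_
    refine hli.notMem_span_image ?_
    simpa using not_lt.2 hij
  have hA : ∀ x ∈ Λk, ‖x‖ ≤ ‖l ka‖ := by
    intro x hx
    obtain ⟨a, -, rfl⟩ := Finset.mem_image.1 hx
    refine IsUltrametricDist.norm_sum_le_of_forall_le_of_nonneg (norm_nonneg _) ?_
    intro i _
    refine (hsmul _ _).trans (hmono _ _ ?_)
    simp only [Fin.le_def, hka, Fin.coe_castLE]
    omega
  have hB : ∀ x ∈ S, x ∉ Λk → ‖l kk‖ ≤ ‖x‖ := by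
    intro x hxS hxΛk
    refine hmin kk x ((hSmem x).1 hxS) ?_
    intro hx
    exact hxΛk ((hΛkmem x).2 hx)
  have hBpos : 0 < ‖l kk‖ := norm_pos_iff.2 (hli.ne_zero kk)
  -- reduce to a contradiction from strict inequality
  refine le_antisymm (hmono ka kk (by simp [Fin.le_def, hka, hkk])) ?_
  by_contra hlt'
  push_neg at hlt'
  -- now ‖l ka‖ < ‖l kk‖; we show eCoeff ≠ 0
  set T0 : Finset C := Λk.erase 0 with hT0
  set P : Finset (Finset C) := S'.powersetCard m with hP
  have hT0card : T0.card = m := by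
    rw [hT0, Finset.card_erase_of_mem h0Λk, hcardΛk]
  have hT0S' : T0 ⊆ S' := Finset.erase_subset_erase _ hΛkS
  have hT0P : T0 ∈ P := Finset.mem_powersetCard.2 ⟨hT0S', hT0card⟩
  set A : NNReal := ‖l ka‖₊ with hAdef
  set B : NNReal := ‖l kk‖₊ with hBdef
  have hAB : A < B := by
    rw [← NNReal.coe_lt_coe]
    simpa [hAdef, hBdef] using hlt'
  have hSpos : ∀ v ∈ S', (0:NNReal) < ‖v‖₊ := fun v hv =>
    nnnorm_pos.2 (Finset.mem_erase.1 hv).1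
  have hnp : ∀ u : Finset C, ‖∏ v ∈ u, (-v⁻¹)‖₊ = (∏ v ∈ u, ‖v‖₊)⁻¹ := by
    intro u
    rw [nnnorm_prod, ← Finset.prod_inv_distrib]
    exact Finset.prod_congr rfl fun v _ => by rw [nnnorm_neg, nnnorm_inv]
  have hkey : ∀ t ∈ P, t ≠ T0 → ‖∏ v ∈ t, (-v⁻¹)‖₊ < ‖∏ v ∈ T0, (-v⁻¹)‖₊ := by
    intro t htP htne
    obtain ⟨hts, htc⟩ := Finset.mem_powersetCard.1 htP
    rw [hnp, hnp]
    set d : ℕ := (T0 \ t).card with hd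
    have hdd : (t \ T0).card = d := Finset.card_sdiff_comm (by rw [htc, hT0card])
    have hdne : d ≠ 0 := by
      intro h
      apply htne
      have hsub : T0 ⊆ t :=
        Finset.sdiff_eq_empty_iff_subset.1 (Finset.card_eq_zero.1 h)
      exact (Finset.eq_of_subset_of_card_le hsub (by rw [htc, hT0card])).symm
    have hsplit : ∀ u w : Finset C,
        ∏ v ∈ u, ‖v‖₊ = (∏ v ∈ u \ w, ‖v‖₊) * ∏ v ∈ u ∩ w, ‖v‖₊ := by
      intro u w
      rw [← Finset.prod_sdiff (Finset.inter_subset_left), Finset.sdiff_inter_self_left]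
    have hIpos : (0:NNReal) < ∏ v ∈ T0 ∩ t, ‖v‖₊ :=
      Finset.prod_pos fun v hv => hSpos v (hT0S' (Finset.mem_of_mem_inter_left hv))
    have h1 : ∏ v ∈ T0, ‖v‖₊ ≤ A ^ d * ∏ v ∈ T0 ∩ t, ‖v‖₊ := by
      rw [hsplit T0 t]
      apply mul_le_mul_left
      apply Finset.prod_le_pow_card
      intro v hv
      have hvΛk : v ∈ Λk := Finset.mem_of_mem_erase (Finset.mem_sdiff.1 hv).1
      rw [← NNReal.coe_le_coe]
      simpa [hAdef] using hA v hvΛk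
    have h2 : B ^ d * ∏ v ∈ T0 ∩ t, ‖v‖₊ ≤ ∏ v ∈ t, ‖v‖₊ := by
      rw [hsplit t T0, Finset.inter_comm t T0]
      apply mul_le_mul_left
      rw [← hdd]
      apply Finset.pow_card_le_prod
      intro v hv
      obtain ⟨hvt, hvT0⟩ := Finset.mem_sdiff.1 hv
      have hvS' := hts hvt
      have hvS : v ∈ S := Finset.mem_of_mem_erase hvS'
      have hvne : v ≠ 0 := (Finset.mem_erase.1 hvS').1
      have hvnΛk : v ∉ Λk := fun h => hvT0 (Finset.mem_erase.2 ⟨hvne, h⟩)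
      rw [← NNReal.coe_le_coe]
      simpa [hBdef] using hB v hvS hvnΛk
    have h3 : A ^ d * (∏ v ∈ T0 ∩ t, ‖v‖₊) < B ^ d * ∏ v ∈ T0 ∩ t, ‖v‖₊ :=
      mul_lt_mul_of_pos_right (pow_lt_pow_left₀ hAB (zero_le (a := A)) hdne) hIpos
    have hfin : ∏ v ∈ T0, ‖v‖₊ < ∏ v ∈ t, ‖v‖₊ := lt_of_le_of_lt h1 (lt_of_lt_of_le h3 h2)
    have hT0pos : (0:NNReal) < ∏ v ∈ T0, ‖v‖₊ :=
      Finset.prod_pos fun v hv => hSpos v (hT0S' hv)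
    exact NNReal.inv_lt_inv hT0pos.ne' hfin
  -- conclude via the ultrametric inequality
  have hM : (0:NNReal) < ‖∏ v ∈ T0, (-v⁻¹)‖₊ := by
    rw [nnnorm_pos]
    apply Finset.prod_ne_zero_iff.2
    intro v hv
    have hvne : v ≠ 0 := (Finset.mem_erase.1 hv).1
    simp [hvne]
  have hrest : ‖∑ t ∈ P.erase T0, ∏ v ∈ t, (-v⁻¹)‖₊ < ‖∏ v ∈ T0, (-v⁻¹)‖₊ := by
    refine lt_of_le_of_lt (Finset.nnnorm_sum_le_sup_nnnorm _ _) ?_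
    rw [Finset.sup_lt_iff (by simpa using hM)]
    intro t ht
    obtain ⟨htne, htP⟩ := Finset.mem_erase.1 ht
    exact hkey t htP htne
  have hE : (0:C) = ∑ t ∈ P, ∏ v ∈ t, (-v⁻¹) := by
    have := aux_eCoeff Fq C l k
    rw [h0] at this
    convert this using 2
  have hdecomp : ∑ t ∈ P, ∏ v ∈ t, (-v⁻¹)
      = (∏ v ∈ T0, (-v⁻¹)) + ∑ t ∈ P.erase T0, ∏ v ∈ t, (-v⁻¹) :=
    (Finset.add_sum_erase P _ hT0P).symm
  have hcontra : ‖(0:C)‖₊ = max (‖∏ v ∈ T0, (-v⁻¹)‖₊) (‖∑ t ∈ P.erase T0, ∏ v ∈ t, (-v⁻¹)‖₊) := by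
    rw [hE, hdecomp]
    exact IsUltrametricDist.nnnorm_add_eq_max_of_nnnorm_ne_nnnorm hrest.ne'
  rw [nnnorm_zero] at hcontra
  rw [max_eq_left hrest.le] at hcontra
  exact absurd hcontra.symm hM.ne'
end

section
/- Let V be a finite F_q-subspace of C_∞ of dimension n with ordered basis {λ_1, ..., λ_n}. For an F_q-linear map φ: V → F_q define M(φ) := ∑'_{λ∈V} φ(λ)/λ. Let φ_j: V → F_q be the coordinate functionals with respect to the basis (φ_j(∑ a_i λ_i) = a_j). Then the elements M(φ_1), ..., M(φ_n) are linearly independent over F_q, and consequently the Moore determinant det_{1≤i,j≤n}(M(φ_j)^{q^i}) is nonzero. -/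
set_option linter.unusedSectionVars false
set_option maxHeartbeats 1000000
open Polynomial Finset

section PreludeLemmas
variable (Fq : Type) [Field Fq] [Fintype Fq]

theorem myProd_X_sub_C : ∏ a : Fq, (X - C a) = X ^ Fintype.card Fq - X := by
  classical
  have hmon : (X ^ Fintype.card Fq - X : Fq[X]).Monic :=
    monic_X_pow_sub (by simpa using Fintype.one_lt_card (α := Fq))
  have hsp : Splits (X ^ Fintype.card Fq - X : Fq[X]) := by
    rw [splits_iff_card_roots, FiniteField.roots_X_pow_card_sub_X,
      FiniteField.X_pow_card_sub_X_natDegree_eq Fq Fintype.one_lt_card]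
    simp
  have := hsp.eq_prod_roots_of_monic hmon
  rw [FiniteField.roots_X_pow_card_sub_X] at this
  rw [this]
  rfl

theorem myProd_sub_smul {A : Type} [CommRing A] [Algebra Fq A] (y : A) (ε : Aˣ) :
    ∏ b : Fq, (y - b • (ε : A)) =
      y ^ Fintype.card Fq - (ε : A) ^ (Fintype.card Fq - 1) * y := by
  classical
  set q := Fintype.card Fq
  set z : A := ((ε⁻¹ : Aˣ) : A) * y with hz
  have h0 := congrArg (aeval z) (myProd_X_sub_C Fq)
  simp only [map_prod, map_sub, map_pow, aeval_X, aeval_C] at h0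
  have h1 : (ε : A) ^ q * ∏ a : Fq, (z - algebraMap Fq A a) =
      (ε : A) ^ q * (z ^ q - z) := by rw [h0]
  calc ∏ b : Fq, (y - b • (ε : A)) = ∏ a : Fq, ((ε : A) * (z - algebraMap Fq A a)) := by
        refine Finset.prod_congr rfl fun a _ => ?_
        rw [mul_sub, hz, Units.mul_inv_cancel_left, Algebra.smul_def, mul_comm ((ε:A)) _]
    _ = (ε : A) ^ q * ∏ a : Fq, (z - algebraMap Fq A a) := by
        rw [Finset.prod_mul_distrib, Finset.prod_const, Finset.card_univ]
    _ = (ε : A) ^ q * (z ^ q - z) := h1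
    _ = y ^ q - (ε : A) ^ (q - 1) * y := by
        have hq : 1 ≤ q := Fintype.card_pos
        rw [mul_sub, ← mul_pow, hz, Units.mul_inv_cancel_left]
        congr 1
        rw [← pow_sub_one_mul (by omega : q ≠ 0) ((ε : A)), mul_assoc,
          Units.mul_inv_cancel_left]

end PreludeLemmas

section QPoly
variable {K : Type} [Field K]

/-- A polynomial all of whose monomials have exponent a power of `q`. -/
def IsQPoly (q : ℕ) (E : K[X]) : Prop := ∀ j, E.coeff j ≠ 0 → ∃ i, j = q ^ i

theorem qpoly_comp (p k : ℕ) [Fact p.Prime] [CharP K p] {E : K[X]}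
    (hE : IsQPoly (p ^ k) E) (t : K) :
    E.comp (X - C t) = E - C (E.eval t) := by
  classical
  conv_lhs => rw [E.as_sum_support, Polynomial.sum_comp]
  have key : ∀ j ∈ E.support,
      (monomial j (E.coeff j)).comp (X - C t)
        = monomial j (E.coeff j) - C (E.coeff j * t ^ j) := by
    intro j hj
    obtain ⟨i, rfl⟩ := hE j (mem_support_iff.mp hj)
    have hexp : (p ^ k) ^ i = p ^ (k * i) := by rw [pow_mul]
    rw [monomial_comp, hexp, sub_pow_char_pow, mul_sub, C_mul_X_pow_eq_monomial,
      ← map_pow, ← map_mul]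
  rw [Finset.sum_congr rfl key, Finset.sum_sub_distrib, ← E.as_sum_support,
    ← map_sum C]
  congr 1
  rw [eval_eq_sum, Polynomial.sum_def]

theorem qpoly_derivative (p k : ℕ) [Fact p.Prime] [CharP K p] (hk : k ≠ 0) {E : K[X]}
    (hE : IsQPoly (p ^ k) E) :
    derivative E = C (E.coeff 1) := by
  ext n
  rw [coeff_derivative]
  rcases Nat.eq_zero_or_pos n with rfl | hn
  · simp
  · rw [coeff_C, if_neg (by omega)]
    by_cases h : E.coeff (n + 1) = 0
    · rw [h, zero_mul]
    · obtain ⟨i, hi⟩ := hE _ h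
      have hi1 : i ≠ 0 := by rintro rfl; simp at hi; omega
      have hdvd : p ∣ n + 1 := by
        rw [hi]
        exact dvd_pow (dvd_pow_self p hk) (by positivity)
      have : ((n : K) + 1) = ((n + 1 : ℕ) : K) := by push_cast; ring
      rw [this, (CharP.cast_eq_zero_iff K p (n + 1)).mpr hdvd, mul_zero]

end QPoly


section QPolyAlg
variable {Fq K : Type} [Field Fq] [Fintype Fq] [Field K] [Algebra Fq K]

theorem qpoly_eval_smul {E : K[X]} (hE : IsQPoly (Fintype.card Fq) E) (b : Fq) (x : K) :
    E.eval (b • x) = b • E.eval x := by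
  rw [eval_eq_sum, eval_eq_sum, Polynomial.sum_def, Polynomial.sum_def, Finset.smul_sum]
  refine Finset.sum_congr rfl fun j hj => ?_
  obtain ⟨i, rfl⟩ := hE j (mem_support_iff.mp hj)
  rw [Algebra.smul_def, Algebra.smul_def, mul_pow, ← map_pow, FiniteField.pow_card_pow]
  ring

theorem qpoly_pow_card {A : K[X]} (p k : ℕ) [Fact p.Prime] [CharP K p]
    (hq : Fintype.card Fq = p ^ k) (hA : IsQPoly (Fintype.card Fq) A) :
    IsQPoly (Fintype.card Fq) (A ^ Fintype.card Fq) ∧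
      (A ^ Fintype.card Fq).coeff 1 = 0 := by
  classical
  have h2 : 1 < Fintype.card Fq := Fintype.one_lt_card
  have hsum : A ^ Fintype.card Fq =
      ∑ j ∈ A.support, monomial (j * Fintype.card Fq) (A.coeff j ^ Fintype.card Fq) := by
    conv_lhs => rw [A.as_sum_support, hq, sum_pow_char_pow]
    refine Finset.sum_congr rfl fun j _ => ?_
    rw [monomial_pow, ← hq]
  constructor
  · intro n hn
    rw [hsum, finset_sum_coeff] at hn
    obtain ⟨j, hj, hne⟩ := Finset.exists_ne_zero_of_sum_ne_zero hn
    rw [coeff_monomial] at hne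
    have hcond : j * Fintype.card Fq = n := by
      by_contra hc; rw [if_neg hc] at hne; exact hne rfl
    obtain ⟨i, rfl⟩ := hA j (mem_support_iff.mp hj)
    exact ⟨i + 1, by rw [← hcond, pow_succ]⟩
  · rw [hsum, finset_sum_coeff]
    refine Finset.sum_eq_zero fun j _ => ?_
    rw [coeff_monomial, if_neg]
    intro hc
    rw [mul_eq_one] at hc
    omega
end QPolyAlg



noncomputable def EPoly (Fq K : Type) [Field Fq] [Fintype Fq] [Field K] [Algebra Fq K]
    {m : ℕ} (l : Fin m → K) : K[X] :=
  ∏ a : Fin m → Fq, (X - C (∑ i, a i • l i))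

section EP
variable {Fq K : Type} [Field Fq] [Fintype Fq] [Field K] [Algebra Fq K]





theorem EPoly_base (l : Fin 0 → K) : EPoly Fq K l = X := by
  rw [EPoly]
  rw [Fintype.prod_unique (fun a : Fin 0 → Fq => (X - C (∑ i, a i • l i)))]
  simp

theorem EPoly_spec (p k : ℕ) [Fact p.Prime] [CharP K p] (hq : Fintype.card Fq = p ^ k)
    (m : ℕ) (l : Fin m → K) (hli : LinearIndependent Fq l) :
    IsQPoly (Fintype.card Fq) (EPoly Fq K l) ∧ (EPoly Fq K l).coeff 1 ≠ 0 := by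
  classical
  induction m with
  | zero =>
    rw [EPoly_base]
    constructor
    · intro j hj
      rw [coeff_X] at hj
      refine ⟨0, ?_⟩
      rw [pow_zero]
      by_contra hne
      rw [if_neg (fun h => hne h.symm)] at hj
      exact hj rfl
    · simp
  | succ m ih =>
    have h2 : 1 < Fintype.card Fq := Fintype.one_lt_card
    set l' : Fin m → K := l ∘ Fin.succ with hl'
    have hli' : LinearIndependent Fq l' := hli.comp Fin.succ (Fin.succ_injective m)
    obtain ⟨hQ, hc1⟩ := ih l' hli'
    set A : K[X] := EPoly Fq K l' with hA
    set e : K := A.eval (l 0) with he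
    have he0 : e ≠ 0 := by
      rw [he, hA, EPoly, eval_prod, Finset.prod_ne_zero_iff]
      intro a _
      rw [eval_sub, eval_X, eval_C, sub_ne_zero]
      intro hcontr
      have hg : ∑ j, (Fin.cons (1 : Fq) (-a) : Fin (m+1) → Fq) j • l j = 0 := by
        rw [Fin.sum_univ_succ]
        simp only [Fin.cons_zero, Fin.cons_succ, one_smul, Pi.neg_apply, neg_smul]
        have hneg : ∑ x : Fin m, -(a x • l x.succ) = -(∑ x : Fin m, a x • l' x) := by
          rw [← Finset.sum_neg_distrib]; rfl
        rw [hneg, hcontr, add_neg_cancel]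
      have h0 := Fintype.linearIndependent_iff.mp hli _ hg 0
      simp at h0
    have hcomp : ∀ b : Fq, A.comp (X - C (b • l 0)) = A - C (b • e) := by
      intro b
      rw [qpoly_comp p k (hq ▸ hQ) (b • l 0), qpoly_eval_smul hQ b (l 0), ← he]
    have hε : IsUnit (C e : K[X]) := Polynomial.isUnit_C.mpr he0.isUnit
    have key : EPoly Fq K l = A ^ Fintype.card Fq - C (e ^ (Fintype.card Fq - 1)) * A := by
      have h1 : EPoly Fq K l = ∏ b : Fq, A.comp (X - C (b • l 0)) := by
        rw [EPoly, ← Equiv.prod_comp (Fin.consEquiv (fun _ : Fin (m+1) => Fq))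
          (fun a => (X - C (∑ i, a i • l i))), Fintype.prod_prod_type]
        refine Finset.prod_congr rfl fun b _ => ?_
        rw [hA, EPoly, Polynomial.prod_comp]
        refine Finset.prod_congr rfl fun a _ => ?_
        rw [sub_comp, X_comp, C_comp]
        simp only [Fin.consEquiv, Equiv.coe_fn_mk]
        rw [Fin.sum_univ_succ]
        simp only [Fin.cons_zero, Fin.cons_succ]
        rw [C_add, sub_sub]
        rfl
      rw [h1]
      have h3 : ∀ b : Fq, A - C (b • e) = A - b • (hε.unit : K[X]) := by
        intro b
        rw [IsUnit.unit_spec, Polynomial.smul_C]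
      calc ∏ b : Fq, A.comp (X - C (b • l 0)) = ∏ b : Fq, (A - b • (hε.unit : K[X])) := by
            refine Finset.prod_congr rfl fun b _ => ?_
            rw [hcomp b, h3 b]
        _ = A ^ Fintype.card Fq - (hε.unit : K[X]) ^ (Fintype.card Fq - 1) * A :=
            myProd_sub_smul Fq A hε.unit
        _ = A ^ Fintype.card Fq - C (e ^ (Fintype.card Fq - 1)) * A := by
            rw [IsUnit.unit_spec, ← map_pow]
    obtain ⟨hQq, h1q⟩ := qpoly_pow_card p k hq hQ
    constructor
    · intro n hn
      rw [key, coeff_sub, coeff_C_mul] at hn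
      by_cases hcase : (A ^ Fintype.card Fq).coeff n = 0
      · rw [hcase, zero_sub, neg_ne_zero] at hn
        exact hQ n (right_ne_zero_of_mul hn)
      · exact hQq n hcase
    · rw [key, coeff_sub, h1q, coeff_C_mul, zero_sub, neg_ne_zero]
      exact mul_ne_zero (pow_ne_zero _ he0) hc1
end EP





section SumInv
variable {Fq K : Type} [Field Fq] [Fintype Fq] [Field K] [Algebra Fq K]



theorem derivative_finset_prod {ι : Type} [DecidableEq ι] (s : Finset ι) (g : ι → K) :
    derivative (∏ i ∈ s, (X - C (g i))) = ∑ i ∈ s, ∏ j ∈ s.erase i, (X - C (g j)) := by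
  induction s using Finset.induction with
  | empty => simp
  | insert a s ha ih =>
    rw [Finset.prod_insert ha, derivative_mul, derivative_sub, derivative_X, derivative_C,
      sub_zero, one_mul, ih, Finset.mul_sum, Finset.sum_insert ha, Finset.erase_insert ha]
    congr 1
    refine Finset.sum_congr rfl fun i hi => ?_
    rw [Finset.erase_insert_of_ne (by rintro rfl; exact ha hi),
      Finset.prod_insert (fun h => ha (Finset.mem_of_mem_erase h))]

theorem sum_inv_ne_zero (p k : ℕ) [Fact p.Prime] [CharP K p] (hq : Fintype.card Fq = p ^ k)
    {m : ℕ} {l : Fin m → K} (hli : LinearIndependent Fq l) {x : K}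
    (hx : ∀ a : Fin m → Fq, x ≠ ∑ i, a i • l i) :
    ∑ a : Fin m → Fq, (x - ∑ i, a i • l i)⁻¹ ≠ 0 := by
  classical
  have hk : k ≠ 0 := by
    rintro rfl
    have h2 := Fintype.one_lt_card (α := Fq)
    rw [hq, pow_zero] at h2
    omega
  obtain ⟨hQ, hc1⟩ := EPoly_spec p k hq m l hli
  have hder : derivative (EPoly Fq K l) = C ((EPoly Fq K l).coeff 1) :=
    qpoly_derivative p k hk (hq ▸ hQ)
  have hder2 : derivative (EPoly Fq K l) =
      ∑ a : Fin m → Fq, ∏ b ∈ univ.erase a, (X - C (∑ i, b i • l i)) := by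
    rw [EPoly, derivative_finset_prod]
  have hev : ∀ a : Fin m → Fq, x - ∑ i, a i • l i ≠ 0 := fun a => sub_ne_zero.mpr (hx a)
  have hprod : (EPoly Fq K l).eval x ≠ 0 := by
    rw [EPoly, eval_prod, Finset.prod_ne_zero_iff]
    intro a _
    rw [eval_sub, eval_X, eval_C]
    exact hev a
  have hkey : (EPoly Fq K l).coeff 1 =
      (EPoly Fq K l).eval x * ∑ a : Fin m → Fq, (x - ∑ i, a i • l i)⁻¹ := by
    have h1 : C ((EPoly Fq K l).coeff 1) = derivative (EPoly Fq K l) := hder.symm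
    have h2 := congrArg (eval x) (h1.trans hder2)
    rw [eval_C] at h2
    rw [h2, eval_finset_sum, Finset.mul_sum]
    refine Finset.sum_congr rfl fun a _ => ?_
    rw [eval_prod]
    have h3 : (x - ∑ i, a i • l i) * ∏ b ∈ univ.erase a,
        eval x (X - C (∑ i, b i • l i)) = (EPoly Fq K l).eval x := by
      rw [EPoly, eval_prod, ← Finset.mul_prod_erase univ _ (mem_univ a)]
      simp only [eval_sub, eval_X, eval_C]
    calc ∏ b ∈ univ.erase a, eval x (X - C (∑ i, b i • l i))
        = (x - ∑ i, a i • l i)⁻¹ * ((x - ∑ i, a i • l i) *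
            ∏ b ∈ univ.erase a, eval x (X - C (∑ i, b i • l i))) :=
          (inv_mul_cancel_left₀ (hev a) _).symm
      _ = eval x (EPoly Fq K l) * (x - ∑ i, a i • l i)⁻¹ := by rw [h3, mul_comm]
  intro h0
  rw [h0, mul_zero] at hkey
  exact hc1 hkey
end SumInv

section Moore
variable {Fq K : Type} [Field Fq] [Fintype Fq] [Field K] [Algebra Fq K]

theorem linearIndependent_pow_card (p k : ℕ) [Fact p.Prime] [CharP K p]
    (hq : Fintype.card Fq = p ^ k) {n : ℕ} {w : Fin n → K}
    (hw : LinearIndependent Fq w) :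
    LinearIndependent Fq (fun j => w j ^ Fintype.card Fq) := by
  rw [Fintype.linearIndependent_iff] at hw ⊢
  intro g hg j
  have h1 : (∑ j, g j • w j) ^ Fintype.card Fq = ∑ j, g j • w j ^ Fintype.card Fq := by
    rw [hq, sum_pow_char_pow]
    refine Finset.sum_congr rfl fun j _ => ?_
    rw [Algebra.smul_def, mul_pow, ← map_pow, ← hq, FiniteField.pow_card, ← Algebra.smul_def]
  have h0 : (∑ j, g j • w j) = 0 :=
    pow_eq_zero_iff (Fintype.card_ne_zero (α := Fq)) |>.mp (h1.trans hg)
  exact hw g h0 j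

theorem moore_det_ne_zero (p k : ℕ) [Fact p.Prime] [CharP K p]
    (hq : Fintype.card Fq = p ^ k) {n : ℕ} {u : Fin n → K}
    (hu : LinearIndependent Fq u) :
    (Matrix.of fun i j : Fin n => u j ^ Fintype.card Fq ^ (i : ℕ)).det ≠ 0 := by
  classical
  intro hdet
  obtain ⟨d, hd0, hdv⟩ := Matrix.exists_vecMul_eq_zero_iff.mpr hdet
  obtain ⟨i₀, hi₀⟩ : ∃ i, d i ≠ 0 := by
    by_contra hc; push_neg at hc; exact hd0 (funext hc)
  have h2 : 1 < Fintype.card Fq := Fintype.one_lt_card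
  set F : K[X] := ∑ i : Fin n, C (d i) * X ^ (Fintype.card Fq ^ (i : ℕ)) with hF
  have hFne : F ≠ 0 := by
    intro h0
    have hcoeff : F.coeff (Fintype.card Fq ^ (i₀ : ℕ)) = d i₀ := by
      rw [hF, finset_sum_coeff, Finset.sum_eq_single i₀]
      · rw [coeff_C_mul, coeff_X_pow, if_pos rfl, mul_one]
      · intro i _ hne
        rw [coeff_C_mul, coeff_X_pow, if_neg, mul_zero]
        intro heq
        exact hne (Fin.ext (Nat.pow_right_injective h2 heq.symm))
      · intro h; exact absurd (mem_univ i₀) h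
    rw [h0, coeff_zero] at hcoeff
    exact hi₀ hcoeff.symm
  have hdeg : F.natDegree ≤ Fintype.card Fq ^ (n - 1) := by
    rw [hF]
    refine le_trans (Polynomial.natDegree_sum_le _ _) ?_
    rw [Finset.fold_max_le]
    refine ⟨by positivity, fun i _ => ?_⟩
    refine le_trans (natDegree_C_mul_le _ _) ?_
    rw [natDegree_X_pow]
    exact Nat.pow_le_pow_right (by omega) (by omega)
  have hroot : ∀ a : Fin n → Fq, F.eval (∑ j, a j • u j) = 0 := by
    intro a
    have hpow : ∀ i : Fin n, (∑ j, a j • u j) ^ (Fintype.card Fq ^ (i : ℕ)) =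
        ∑ j, a j • (u j ^ Fintype.card Fq ^ (i : ℕ)) := by
      intro i
      have hq' : Fintype.card Fq ^ (i : ℕ) = p ^ (k * (i : ℕ)) := by
        rw [hq, pow_mul]
      rw [hq', ← iterateFrobenius_def, map_sum]
      refine Finset.sum_congr rfl fun j _ => ?_
      rw [Algebra.smul_def, Algebra.smul_def, map_mul, iterateFrobenius_def,
        iterateFrobenius_def, ← map_pow, ← hq', FiniteField.pow_card_pow]
    rw [hF, eval_finset_sum]
    have : ∀ i : Fin n, eval (∑ j, a j • u j) (C (d i) * X ^ (Fintype.card Fq ^ (i : ℕ)))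
        = ∑ j, a j • (d i * u j ^ (Fintype.card Fq ^ (i : ℕ))) := by
      intro i
      rw [eval_mul, eval_C, eval_pow, eval_X, hpow i, Finset.mul_sum]
      exact Finset.sum_congr rfl fun j _ => (mul_smul_comm _ _ _)
    rw [Finset.sum_congr rfl fun i _ => this i, Finset.sum_comm]
    refine Finset.sum_eq_zero fun j _ => ?_
    rw [← Finset.smul_sum]
    have hcol : ∑ i, d i * u j ^ (Fintype.card Fq ^ (i : ℕ)) = 0 := by
      have := congrFun hdv j
      simpa [Matrix.vecMul, dotProduct] using this
    rw [hcol, smul_zero]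
  have hinj : Function.Injective (fun a : Fin n → Fq => ∑ j, a j • u j) := by
    intro a b hab
    have hz : ∑ j, (a j - b j) • u j = 0 := by
      simp only [sub_smul, Finset.sum_sub_distrib]
      rw [show (∑ x : Fin n, a x • u x) = ∑ x : Fin n, b x • u x from hab, sub_self]
    have := Fintype.linearIndependent_iff.mp hu (fun j => a j - b j) hz
    funext j
    have hj := this j
    rwa [sub_eq_zero] at hj
  set T : Finset K := Finset.image (fun a : Fin n → Fq => ∑ j, a j • u j) univ with hT
  have hTsub : T ⊆ F.roots.toFinset := by
    intro z hz
    rw [hT, Finset.mem_image] at hz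
    obtain ⟨a, _, rfl⟩ := hz
    rw [Multiset.mem_toFinset, mem_roots hFne]
    exact hroot a
  have hTcard : T.card = Fintype.card Fq ^ n := by
    rw [hT, Finset.card_image_of_injective _ hinj]
    simp [Fintype.card_fun]
  have hle : Fintype.card Fq ^ n ≤ Fintype.card Fq ^ (n - 1) := by
    calc Fintype.card Fq ^ n = T.card := hTcard.symm
      _ ≤ F.roots.toFinset.card := Finset.card_le_card hTsub
      _ ≤ Multiset.card F.roots := Multiset.toFinset_card_le _
      _ ≤ F.natDegree := Polynomial.card_roots' F
      _ ≤ Fintype.card Fq ^ (n - 1) := hdeg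
  have hlt := Nat.pow_lt_pow_right h2 (by have := i₀.pos; omega : n - 1 < n)
  omega
end Moore

/-- `M(φ_j) = ∑'_{λ∈V} φ_j(λ)/λ`, where `φ_j` is the `j`-th coordinate functional of the
finite `F_q`-space `V` spanned by the linearly independent family `l`: concretely, the
sum over nonzero coefficient tuples `a` of `a_j / (∑ a_i l_i)`. -/
noncomputable def MPhi (Fq C : Type) [Field Fq] [Fintype Fq] [Field C]
    [Algebra Fq C] {n : ℕ} (l : Fin n → C) (j : Fin n) : C := by
  classical exact
    ∑ a ∈ Finset.univ.filter (fun a : Fin n → Fq => a ≠ 0),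
      algebraMap Fq C (a j) * (∑ i, a i • l i)⁻¹



section Part1
variable {Fq K : Type} [Field Fq] [Fintype Fq] [Field K] [Algebra Fq K]


theorem mphi_linearIndependent (p k : ℕ) [Fact p.Prime] [CharP K p]
    (hq : Fintype.card Fq = p ^ k) {n : ℕ} {l : Fin n → K}
    (hli : LinearIndependent Fq l) :
    LinearIndependent Fq (fun j : Fin n => MPhi Fq K l j) := by
  classical
  rw [Fintype.linearIndependent_iff]
  intro c hc
  by_contra hcne
  push_neg at hcne
  obtain ⟨j₀, hj₀⟩ := hcne
  -- the linear-combination maps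
  set slm : (Fin n → Fq) →ₗ[Fq] K := Fintype.linearCombination Fq l with hslm
  have hslm_apply : ∀ a : Fin n → Fq, slm a = ∑ i, a i • l i := fun a => rfl
  have hsinj : ∀ a : Fin n → Fq, slm a = 0 → a = 0 := by
    intro a ha
    exact funext (Fintype.linearIndependent_iff.mp hli a ha)
  set ψ : (Fin n → Fq) →ₗ[Fq] Fq := Fintype.linearCombination Fq c with hψ
  have hψ_apply : ∀ a : Fin n → Fq, ψ a = ∑ j, a j • c j := fun a => rfl
  set a₀ : Fin n → Fq := fun j => (c j₀)⁻¹ * (Pi.single j₀ (1:Fq) : Fin n → Fq) j with ha₀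
  have hψa₀ : ψ a₀ = 1 := by
    rw [hψ_apply]
    rw [Finset.sum_eq_single j₀]
    · show ((c j₀)⁻¹ * (Pi.single j₀ (1:Fq) : Fin n → Fq) j₀) • c j₀ = 1
      rw [Pi.single_eq_same, mul_one, smul_eq_mul, inv_mul_cancel₀ hj₀]
    · intro j _ hne
      show ((c j₀)⁻¹ * (Pi.single j₀ (1:Fq) : Fin n → Fq) j) • c j = 0
      rw [Pi.single_eq_of_ne hne, mul_zero, zero_smul]
    · intro h; exact absurd (mem_univ j₀) h
  -- kernel of ψ and its basis
  set W := LinearMap.ker ψ with hW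
  have hrange : LinearMap.range ψ = ⊤ := by
    rw [LinearMap.range_eq_top]
    intro t
    refine ⟨t • a₀, ?_⟩
    rw [map_smul, hψa₀, smul_eq_mul, mul_one]
  have hn1 : 1 ≤ n := j₀.pos
  have hfr : Module.finrank Fq W = n - 1 := by
    have h1 := LinearMap.finrank_range_add_finrank_ker ψ
    rw [hrange, finrank_top, Module.finrank_self, Module.finrank_pi,
      Fintype.card_fin] at h1
    rw [← hW] at h1
    omega
  set b : Module.Basis (Fin (n - 1)) Fq W := Module.finBasisOfFinrankEq Fq W hfr with hb
  set v : Fin (n - 1) → K := fun i => slm (b i : Fin n → Fq) with hv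
  have hslmker : LinearMap.ker slm = ⊥ := LinearMap.ker_eq_bot'.mpr hsinj
  have hbamb : LinearIndependent Fq (fun i => ((b i : W) : Fin n → Fq)) :=
    b.linearIndependent.map' W.subtype (Submodule.ker_subtype W)
  have hvli : LinearIndependent Fq v := hbamb.map' slm hslmker
  set u : K := slm a₀ with hu
  have hψb : ∀ i, ψ ((b i : W) : Fin n → Fq) = 0 := fun i => (b i).2
  have hψsum : ∀ y : Fin (n - 1) → Fq, ψ (∑ i, y i • ((b i : W) : Fin n → Fq)) = 0 := by
    intro y
    rw [map_sum]
    refine Finset.sum_eq_zero fun i _ => ?_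
    rw [map_smul, hψb i, smul_zero]
  have hau : ∀ y : Fin (n - 1) → Fq, a₀ + (∑ i, y i • ((b i : W) : Fin n → Fq)) ≠ 0 := by
    intro y h
    have := congrArg ψ h
    rw [map_add, hψa₀, hψsum y, map_zero, add_zero] at this
    exact one_ne_zero this
  have hSv : ∀ y : Fin (n - 1) → Fq, ∑ i, y i • v i =
      slm (∑ i, y i • ((b i : W) : Fin n → Fq)) := by
    intro y
    rw [map_sum]
    exact Finset.sum_congr rfl fun i _ => (map_smul slm _ _).symm
  have hxne : ∀ y : Fin (n - 1) → Fq, u + ∑ i, y i • v i ≠ 0 := by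
    intro y h
    rw [hSv y, hu, ← map_add] at h
    exact hau y (hsinj _ h)
  -- H is nonzero
  set H : K := ∑ y : Fin (n - 1) → Fq, (u + ∑ i, y i • v i)⁻¹ with hH
  have hHne : H ≠ 0 := by
    have hx : ∀ y : Fin (n - 1) → Fq, -u ≠ ∑ i, y i • v i := by
      intro y h
      exact hxne y (by rw [← h]; ring)
    have hS := sum_inv_ne_zero p k hq hvli hx
    intro h0
    apply hS
    have : ∀ y : Fin (n - 1) → Fq, (-u - ∑ i, y i • v i)⁻¹ = -(u + ∑ i, y i • v i)⁻¹ := by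
      intro y
      rw [← inv_neg]
      ring_nf
    rw [Finset.sum_congr rfl fun y _ => this y, Finset.sum_neg_distrib, ← hH, h0, neg_zero]
  -- rewrite the hypothesis as a single sum M
  have hMPhi : ∀ j, MPhi Fq K l j =
      ∑ a : Fin n → Fq, algebraMap Fq K (a j) * (slm a)⁻¹ := by
    intro j
    rw [MPhi]
    rw [Finset.sum_filter_of_ne]
    · exact Finset.sum_congr rfl fun a _ => rfl
    · intro a _ hterm ha0
      apply hterm
      rw [ha0]
      simp
  have hM0 : (0 : K) = ∑ a : Fin n → Fq, algebraMap Fq K (ψ a) * (slm a)⁻¹ := by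
    rw [← hc]
    calc ∑ j, c j • MPhi Fq K l j
        = ∑ j, ∑ a : Fin n → Fq, algebraMap Fq K (c j * a j) * (slm a)⁻¹ := by
          refine Finset.sum_congr rfl fun j _ => ?_
          rw [hMPhi j, Finset.smul_sum]
          refine Finset.sum_congr rfl fun a _ => ?_
          rw [Algebra.smul_def, ← mul_assoc, ← map_mul]
      _ = ∑ a : Fin n → Fq, ∑ j, algebraMap Fq K (c j * a j) * (slm a)⁻¹ :=
          Finset.sum_comm
      _ = ∑ a : Fin n → Fq, algebraMap Fq K (ψ a) * (slm a)⁻¹ := by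
          refine Finset.sum_congr rfl fun a _ => ?_
          rw [← Finset.sum_mul, ← map_sum]
          congr 2
          rw [hψ_apply]
          exact Finset.sum_congr rfl fun j _ => by rw [smul_eq_mul, mul_comm]
  -- reindex by the bijection (t, y) ↦ t • a₀ + ∑ y i • b i
  set f : Fq × (Fin (n - 1) → Fq) → (Fin n → Fq) :=
    fun ty => ty.1 • a₀ + ∑ i, ty.2 i • ((b i : W) : Fin n → Fq) with hf
  have hψf : ∀ ty, ψ (f ty) = ty.1 := by
    intro ty
    rw [hf]
    simp only []
    rw [map_add, map_smul, hψa₀, hψsum, smul_eq_mul, mul_one, add_zero]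
  have hfinj : Function.Injective f := by
    intro x y hxy
    have ht : x.1 = y.1 := by rw [← hψf x, ← hψf y, hxy]
    have hs : ∑ i, x.2 i • ((b i : W) : Fin n → Fq)
        = ∑ i, y.2 i • ((b i : W) : Fin n → Fq) := by
      have := hxy
      rw [hf] at this
      simp only [] at this
      rw [ht] at this
      exact add_left_cancel this
    have hz : ∑ i, (x.2 i - y.2 i) • ((b i : W) : Fin n → Fq) = 0 := by
      simp only [sub_smul, Finset.sum_sub_distrib]
      rw [hs, sub_self]
    have h2 := Fintype.linearIndependent_iff.mp hbamb _ hz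
    have : x.2 = y.2 := by
      funext i
      have := h2 i
      rwa [sub_eq_zero] at this
    exact Prod.ext ht this
  have hfbij : Function.Bijective f := by
    rw [Fintype.bijective_iff_injective_and_card]
    refine ⟨hfinj, ?_⟩
    rw [Fintype.card_prod, Fintype.card_fun, Fintype.card_fun, Fintype.card_fin,
      Fintype.card_fin]
    rw [← pow_succ']
    congr 1
    omega
  have hslmf : ∀ ty : Fq × (Fin (n - 1) → Fq),
      slm (f ty) = ty.1 • u + ∑ i, ty.2 i • v i := by
    intro ty
    rw [hf]
    simp only []
    rw [map_add, map_smul, hSv ty.2, hu]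
  have hM1 : ∑ a : Fin n → Fq, algebraMap Fq K (ψ a) * (slm a)⁻¹ =
      ∑ ty : Fq × (Fin (n - 1) → Fq),
        algebraMap Fq K ty.1 * (ty.1 • u + ∑ i, ty.2 i • v i)⁻¹ := by
    rw [← Fintype.sum_bijective f hfbij _ _ (fun ty => rfl)]
    exact Finset.sum_congr rfl fun ty _ => by rw [hψf ty, hslmf ty]
  have halg_ne : ∀ t : Fq, t ≠ 0 → algebraMap Fq K t ≠ 0 := by
    intro t ht h
    exact ht ((algebraMap Fq K).injective (by rw [h, map_zero]))
  have hinner : ∀ t : Fq, t ≠ 0 →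
      ∑ y : Fin (n - 1) → Fq, algebraMap Fq K t * (t • u + ∑ i, y i • v i)⁻¹ = H := by
    intro t ht
    rw [hH]
    rw [← Fintype.sum_bijective (fun y : Fin (n - 1) → Fq => t • y)
      (MulAction.bijective (Units.mk0 t ht)) _ _ (fun y => rfl)]
    refine Finset.sum_congr rfl fun y _ => ?_
    have hSt : ∑ i, (t • y) i • v i = t • ∑ i, y i • v i := by
      rw [Finset.smul_sum]
      refine Finset.sum_congr rfl fun i _ => ?_
      rw [Pi.smul_apply, smul_eq_mul, mul_smul]
    rw [hSt, ← smul_add, Algebra.smul_def, mul_inv_rev,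
      mul_comm ((u + ∑ i, y i • v i))⁻¹ _, ← mul_assoc,
      mul_inv_cancel₀ (halg_ne t ht), one_mul]
  have hM2 : ∑ ty : Fq × (Fin (n - 1) → Fq),
      algebraMap Fq K ty.1 * (ty.1 • u + ∑ i, ty.2 i • v i)⁻¹
      = ∑ t : Fq, ∑ y : Fin (n - 1) → Fq,
          algebraMap Fq K t * (t • u + ∑ i, y i • v i)⁻¹ := by
    exact Fintype.sum_prod_type _
  have hzero : ∑ y : Fin (n - 1) → Fq,
      algebraMap Fq K (0 : Fq) * ((0 : Fq) • u + ∑ i, y i • v i)⁻¹ = 0 := by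
    refine Finset.sum_eq_zero fun y _ => ?_
    rw [map_zero, zero_mul]
  have hfinal : (0 : K) = (Fintype.card Fq - 1) • H := by
    rw [hM0, hM1, hM2]
    rw [show (∑ t : Fq, ∑ y : Fin (n - 1) → Fq,
        algebraMap Fq K t * (t • u + ∑ i, y i • v i)⁻¹)
        = ∑ t ∈ univ.erase (0 : Fq), ∑ y : Fin (n - 1) → Fq,
            algebraMap Fq K t * (t • u + ∑ i, y i • v i)⁻¹
      from (Finset.sum_erase (f := fun t : Fq => ∑ y : Fin (n - 1) → Fq,
        algebraMap Fq K t * (t • u + ∑ i, y i • v i)⁻¹) univ hzero).symm]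
    rw [Finset.sum_congr rfl (fun t ht => hinner t (Finset.ne_of_mem_erase ht)),
      Finset.sum_const, Finset.card_erase_of_mem (mem_univ 0), Finset.card_univ]
  have hcast : ((Fintype.card Fq - 1 : ℕ) : K) = -1 := by
    have h1 : ((Fintype.card Fq : ℕ) : K) = 0 := by
      calc ((Fintype.card Fq : ℕ) : K)
          = algebraMap Fq K ((Fintype.card Fq : ℕ) : Fq) := (map_natCast _ _).symm
        _ = 0 := by rw [FiniteField.cast_card_eq_zero, map_zero]
    rw [Nat.cast_sub Fintype.card_pos, h1, Nat.cast_one, zero_sub]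
  rw [nsmul_eq_mul, hcast, neg_one_mul] at hfinal
  exact hHne (neg_eq_zero.mp hfinal.symm)

/-- The elements `M(φ_1), …, M(φ_n)` are `F_q`-linearly independent, and the Moore
determinant `det (M(φ_j)^{q^i})_{1≤i,j≤n}` is nonzero. -/
theorem mphi_linearIndependent_and_moore_det_ne_zero (Fq C : Type) [Field Fq]
    [Fintype Fq] [Field C] [Algebra Fq C]
    {n : ℕ} (l : Fin n → C) (hli : LinearIndependent Fq l) :
    LinearIndependent Fq (fun j : Fin n => MPhi Fq C l j) ∧
      Matrix.det (Matrix.of fun i j : Fin n =>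
        (MPhi Fq C l j) ^ (Fintype.card Fq) ^ ((i : ℕ) + 1)) ≠ 0 := by
  classical
  obtain ⟨p, hp⟩ := CharP.exists Fq
  haveI := hp
  obtain ⟨kp, hprime, hcard⟩ := FiniteField.card Fq p
  haveI : Fact p.Prime := ⟨hprime⟩
  haveI : CharP C p := charP_of_injective_algebraMap (algebraMap Fq C).injective p
  have hq : Fintype.card Fq = p ^ (kp : ℕ) := hcard
  have h1 := mphi_linearIndependent p (kp : ℕ) hq hli
  refine ⟨h1, ?_⟩
  have h2 := linearIndependent_pow_card p (kp : ℕ) hq h1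
  have h3 := moore_det_ne_zero p (kp : ℕ) hq h2
  have hM : (Matrix.of fun i j : Fin n =>
      (MPhi Fq C l j) ^ (Fintype.card Fq) ^ ((i : ℕ) + 1))
      = (Matrix.of fun i j : Fin n =>
          (MPhi Fq C l j ^ Fintype.card Fq) ^ Fintype.card Fq ^ (i : ℕ)) := by
    ext i j
    rw [Matrix.of_apply, Matrix.of_apply, pow_succ', pow_mul]
  rw [hM]
  exact h3
end Part1
end

section
/- Let ρ be the Carlitz module over A = F_q[T], with ρ_a(X) = ∑_{0≤k≤d} {}_ac_k X^{q^k} for a ∈ A of degree d. Then log_q |{}_ac_k| = (d−k)·q^k for 0 ≤ k ≤ d, and {}_ac_k = 0 for k > d. -/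
/-- Degrees of the coefficients of the Carlitz module.  Let `c a k` denote the `k`-th
coefficient `{}_ac_k` of the Carlitz operator `ρ_a = ∑_k {}_ac_k τ^k`, characterized by:
`F_q`-linearity in `a`, `ρ_{C s} = C s·τ^0`, and `ρ_{T·a} = ρ_T ∘ ρ_a`
(i.e. `c (Ta) k = T·(c a k) + (c a (k−1))^q`).  Then for `a ≠ 0` of degree `d`:
`log_q |{}_ac_k| = deg ({}_ac_k) = (d − k)·q^k` for `0 ≤ k ≤ d`, and `{}_ac_k = 0` for
`k > d`. -/
theorem carlitz_coefficient_degrees (Fq : Type) [Field Fq] [Fintype Fq]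
    (c : Polynomial Fq → ℕ → Polynomial Fq)
    (hadd : ∀ a b k, c (a + b) k = c a k + c b k)
    (hsmul : ∀ (s : Fq) a k, c (Polynomial.C s * a) k = Polynomial.C s * c a k)
    (hconst0 : ∀ s : Fq, c (Polynomial.C s) 0 = Polynomial.C s)
    (hconst : ∀ s : Fq, ∀ k, 0 < k → c (Polynomial.C s) k = 0)
    (hX0 : ∀ a, c (Polynomial.X * a) 0 = Polynomial.X * c a 0)
    (hXk : ∀ a k, c (Polynomial.X * a) (k + 1) =
      Polynomial.X * c a (k + 1) + (c a k) ^ (Fintype.card Fq))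
    (a : Polynomial Fq) (ha : a ≠ 0) :
    (∀ k ≤ a.natDegree, c a k ≠ 0 ∧
      (c a k).natDegree = (a.natDegree - k) * (Fintype.card Fq) ^ k) ∧
    ∀ k, a.natDegree < k → c a k = 0 := by
  set q := Fintype.card Fq with hqdef
  have hq : 1 < q := Fintype.one_lt_card
  suffices H : ∀ n (a : Polynomial Fq), a ≠ 0 → a.natDegree = n →
      (∀ k ≤ n, c a k ≠ 0 ∧ (c a k).natDegree = (n - k) * q ^ k) ∧
      ∀ k, n < k → c a k = 0 by
    obtain ⟨h1, h2⟩ := H a.natDegree a ha rfl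
    exact ⟨h1, h2⟩
  intro n
  induction n with
  | zero =>
    intro a ha hd
    have hac : a = Polynomial.C (a.coeff 0) := Polynomial.eq_C_of_natDegree_eq_zero hd
    constructor
    · intro k hk
      interval_cases k
      rw [hac, hconst0]
      exact ⟨by rwa [← hac], by simp⟩
    · intro k hk
      rw [hac, hconst _ k hk]
  | succ n ih =>
    intro a ha hd
    set b := a.divX with hb
    have hbne : b ≠ 0 := by
      intro h
      rw [hb, Polynomial.divX_eq_zero_iff] at h
      rw [h, Polynomial.natDegree_C] at hd
      exact Nat.succ_ne_zero n hd.symm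
    have hbd : b.natDegree = n := by
      rw [hb, Polynomial.natDegree_divX_eq_natDegree_tsub_one, hd]
      rfl
    obtain ⟨ih1, ih2⟩ := ih b hbne hbd
    have ha' : a = Polynomial.X * b + Polynomial.C (a.coeff 0) :=
      (Polynomial.X_mul_divX_add a).symm
    have hc0 : c a 0 = Polynomial.X * c b 0 + Polynomial.C (a.coeff 0) := by
      conv_lhs => rw [ha']
      rw [hadd, hX0, hconst0]
    have hck : ∀ k, c a (k + 1) = Polynomial.X * c b (k + 1) + (c b k) ^ q := by
      intro k
      conv_lhs => rw [ha']
      rw [hadd, hXk, hconst _ _ (Nat.succ_pos k), add_zero]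
    constructor
    · intro k hk
      match k with
      | 0 =>
        obtain ⟨hne, hdeg⟩ := ih1 0 (Nat.zero_le n)
        have hdX : (Polynomial.X * c b 0).natDegree = n + 1 := by
          rw [Polynomial.natDegree_mul Polynomial.X_ne_zero hne,
            Polynomial.natDegree_X, hdeg]
          simp only [pow_zero, mul_one, Nat.sub_zero]
          omega
        have hdeg' : (c a 0).natDegree = n + 1 := by
          rw [hc0, Polynomial.natDegree_add_eq_left_of_natDegree_lt, hdX]
          rw [hdX, Polynomial.natDegree_C]
          exact Nat.succ_pos n
        constructor
        · intro h
          rw [h, Polynomial.natDegree_zero] at hdeg'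
          exact Nat.succ_ne_zero n hdeg'.symm
        · simpa using hdeg'
      | j + 1 =>
        obtain ⟨hne, hdeg⟩ := ih1 j (Nat.lt_succ_iff.mp hk)
        have hpow : ((c b j) ^ q).natDegree = (n - j) * q ^ (j + 1) := by
          rw [Polynomial.natDegree_pow, hdeg, pow_succ]
          ring
        rcases Nat.lt_or_ge j n with hj | hj
        · -- j + 1 ≤ n
          obtain ⟨hne1, hdeg1⟩ := ih1 (j + 1) hj
          have hdX : (Polynomial.X * c b (j + 1)).natDegree
              = 1 + (n - (j + 1)) * q ^ (j + 1) := by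
            rw [Polynomial.natDegree_mul Polynomial.X_ne_zero hne1,
              Polynomial.natDegree_X, hdeg1]
          have hlt : (Polynomial.X * c b (j + 1)).natDegree < ((c b j) ^ q).natDegree := by
            rw [hdX, hpow]
            have h1 : 1 < q ^ (j + 1) := one_lt_pow₀ (n := j + 1) hq (Nat.succ_ne_zero j)
            have h2 : n - (j + 1) + 1 ≤ n - j := by omega
            calc 1 + (n - (j + 1)) * q ^ (j + 1)
                < q ^ (j + 1) + (n - (j + 1)) * q ^ (j + 1) := by omega
              _ = (n - (j + 1) + 1) * q ^ (j + 1) := by ring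
              _ ≤ (n - j) * q ^ (j + 1) := Nat.mul_le_mul_right _ h2
          have hdeg' : (c a (j + 1)).natDegree = (n - j) * q ^ (j + 1) := by
            rw [hck, Polynomial.natDegree_add_eq_right_of_natDegree_lt hlt, hpow]
          refine ⟨?_, by rw [hdeg']; congr 1; omega⟩
          intro h
          rw [h, Polynomial.natDegree_zero] at hdeg'
          have : 0 < (n - j) * q ^ (j + 1) := by
            have : 0 < q ^ (j + 1) := by positivity
            have : 0 < n - j := by omega
            positivity
          omega
        · -- j = n
          have hjn : j = n := by omega
          have hz : c b (j + 1) = 0 := ih2 (j + 1) (by omega)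
          have he : c a (j + 1) = (c b j) ^ q := by
            rw [hck, hz, mul_zero, zero_add]
          refine ⟨?_, ?_⟩
          · rw [he]
            exact pow_ne_zero _ hne
          · rw [he, hpow]
            congr 1
            omega
    · intro k hk
      match k with
      | j + 1 =>
        have h1 : c b (j + 1) = 0 := ih2 (j + 1) (by omega)
        have h2 : c b j = 0 := ih2 j (by omega)
        rw [hck, h1, h2, mul_zero, zero_add, zero_pow (by omega)]
end

section
/- Let Λ be a rank-r A-lattice in C_∞ with successive minimum basis {ω_r, ω_{r−1}, ..., ω_1} (in increasing order of absolute value). Then the family {T^j ω_i : 1 ≤ i ≤ r, j ≥ 0} is an F_q-basis of Λ, and ordering this family by the rule (j,i) ≺ (j',i') iff |T^j ω_i| < |T^{j'} ω_{i'}|, or |T^j ω_i| = |T^{j'} ω_{i'}| and i > i', yields a successive minimum basis of Λ as a discrete F_q-subspace of C_∞. -/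
/-- The `A = F_q[T]`-span of `ω_1, …, ω_r` inside `C`, where `T` acts through `t`. -/
def ASpan (Fq C : Type) [Field Fq] [Fintype Fq] [NormedField C] [Algebra Fq C]
    {r : ℕ} (t : C) (ω : Fin r → C) : Set C :=
  {x : C | ∃ a : Fin r → Polynomial Fq, x = ∑ i, Polynomial.aeval t (a i) * ω i}

/-- Let `Λ` be a rank-`r` `A`-lattice with `A`-successive-minimum-basis
`{ω_r, …, ω_1}` (indexed so that `‖ω i‖` decreases as `i` increases; `ω i` is minimal
among lattice elements outside the `A`-span of the later `ω`'s).  Then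
`{T^j ω_i : 1 ≤ i ≤ r, j ≥ 0}` is an `F_q`-basis of `Λ`, and ordering it by
`(j,i) ≺ (j',i') ⟺ |T^jω_i| < |T^{j'}ω_{i'}|`, or equality and `i > i'`, yields a
successive minimum basis of `Λ` as a discrete `F_q`-subspace of `C_∞`. -/
theorem a_smb_gives_fq_smb (Fq C : Type) [Field Fq] [Fintype Fq] [NormedField C]
    [Algebra Fq C] [IsUltrametricDist C]
    (r : ℕ) (t : C)
    (hnorm : ∀ p : Polynomial Fq, p ≠ 0 →
      ‖Polynomial.aeval t p‖ = (Fintype.card Fq : ℝ) ^ p.natDegree)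
    (ω : Fin r → C) (hω : ∀ i, ω i ≠ 0)
    (hmax : ∀ (a : Fin r → Polynomial Fq) (i : Fin r),
      ‖Polynomial.aeval t (a i) * ω i‖ ≤ ‖∑ j, Polynomial.aeval t (a j) * ω j‖)
    (hASMB : ∀ i : Fin r, ∀ x ∈ ASpan Fq C t ω,
      x ∉ Submodule.span Fq {y : C | ∃ (j : ℕ) (i' : Fin r), i < i' ∧ y = t ^ j * ω i'} →
      ‖ω i‖ ≤ ‖x‖) :
    LinearIndependent Fq (fun p : ℕ × Fin r => t ^ p.1 * ω p.2) ∧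
    (Submodule.span Fq (Set.range fun p : ℕ × Fin r => t ^ p.1 * ω p.2) : Set C) =
      ASpan Fq C t ω ∧
    ∀ p : ℕ × Fin r, ∀ x ∈ ASpan Fq C t ω,
      x ∉ Submodule.span Fq ((fun p' : ℕ × Fin r => t ^ p'.1 * ω p'.2) ''
        {p' : ℕ × Fin r | ‖t ^ p'.1 * ω p'.2‖ < ‖t ^ p.1 * ω p.2‖ ∨
          (‖t ^ p'.1 * ω p'.2‖ = ‖t ^ p.1 * ω p.2‖ ∧ p.2 < p'.2)}) →
      ‖t ^ p.1 * ω p.2‖ ≤ ‖x‖ := by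
  classical
  set q : ℝ := (Fintype.card Fq : ℝ) with hqdef
  have hq1 : (1:ℝ) ≤ q := Nat.one_le_cast.mpr Fintype.card_pos
  have hq0 : (0:ℝ) < q := lt_of_lt_of_le zero_lt_one hq1
  have ht : ‖t‖ = q := by simpa using hnorm Polynomial.X Polynomial.X_ne_zero
  have htpow : ∀ j : ℕ, ‖t ^ j‖ = q ^ j := fun j => by rw [norm_pow, ht]
  -- decompose aeval * ω as an Fq-combination
  have hdecomp : ∀ (p : Polynomial Fq) (i : Fin r),
      Polynomial.aeval t p * ω i
        = ∑ j ∈ Finset.range (p.natDegree + 1), p.coeff j • (t ^ j * ω i) := by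
    intro p i
    rw [Polynomial.aeval_eq_sum_range, Finset.sum_mul]
    simp [smul_mul_assoc]
  -- membership lemma
  have hmem : ∀ (S : Set (ℕ × Fin r)) (a : Fin r → Polynomial Fq),
      (∀ (i : Fin r) (j : ℕ), (a i).coeff j ≠ 0 → (j, i) ∈ S) →
      (∑ i, Polynomial.aeval t (a i) * ω i) ∈
        Submodule.span Fq ((fun p : ℕ × Fin r => t ^ p.1 * ω p.2) '' S) := by
    intro S a hS
    refine Submodule.sum_mem _ fun i _ => ?_
    rw [hdecomp]
    refine Submodule.sum_mem _ fun j _ => ?_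
    by_cases h : (a i).coeff j = 0
    · simp [h]
    · exact Submodule.smul_mem _ _ (Submodule.subset_span ⟨(j, i), hS i j h, rfl⟩)
  -- norm lower bound
  have hlow : ∀ (p : Polynomial Fq) (j : ℕ), p.coeff j ≠ 0 →
      q ^ j ≤ ‖Polynomial.aeval t p‖ := by
    intro p j hj
    have hp : p ≠ 0 := fun h => hj (by simp [h])
    rw [hnorm p hp]
    exact pow_le_pow_right₀ hq1 (Polynomial.le_natDegree_of_ne_zero hj)
  -- key computation for linear independence
  refine ⟨?_, ?_, ?_⟩
  · rw [linearIndependent_iff']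
    intro s g hsum p hp
    set a : Fin r → Polynomial Fq :=
      fun i => ∑ p ∈ s, if p.2 = i then Polynomial.monomial p.1 (g p) else 0 with ha
    have hsum2 : ∑ i, Polynomial.aeval t (a i) * ω i
        = ∑ p ∈ s, g p • (t ^ p.1 * ω p.2) := by
      calc ∑ i, Polynomial.aeval t (a i) * ω i
          = ∑ i, ∑ p ∈ s, (if p.2 = i then g p • (t ^ p.1 * ω i) else 0) := by
            refine Finset.sum_congr rfl fun i _ => ?_
            simp [ha, Finset.sum_mul, apply_ite (Polynomial.aeval t),
              Polynomial.aeval_monomial, ite_mul, Algebra.smul_def, mul_assoc]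
        _ = ∑ p ∈ s, ∑ i, (if p.2 = i then g p • (t ^ p.1 * ω i) else 0) :=
            Finset.sum_comm
        _ = ∑ p ∈ s, g p • (t ^ p.1 * ω p.2) := by
            refine Finset.sum_congr rfl fun p _ => ?_
            simp [Finset.sum_ite_eq]
    rw [hsum] at hsum2
    have hzero : ∀ i, a i = 0 := by
      intro i
      have h1 : ‖Polynomial.aeval t (a i) * ω i‖ ≤ 0 := by
        have := hmax a i
        rw [hsum2, norm_zero] at this
        exact this
      have h2 : Polynomial.aeval t (a i) * ω i = 0 :=
        norm_le_zero_iff.mp h1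
      have h3 : Polynomial.aeval t (a i) = 0 := by
        rcases mul_eq_zero.mp h2 with h | h
        · exact h
        · exact absurd h (hω i)
      by_contra hne
      have := hnorm (a i) hne
      rw [h3, norm_zero] at this
      exact absurd this.symm (ne_of_gt (pow_pos hq0 _))
    have hcoeff : (a p.2).coeff p.1 = g p := by
      have : (a p.2).coeff p.1 = ∑ p' ∈ s, if p = p' then g p' else 0 := by
        rw [ha, Polynomial.finset_sum_coeff]
        refine Finset.sum_congr rfl fun p' _ => ?_
        rcases p' with ⟨j', i'⟩
        by_cases h1 : i' = p.2 <;> by_cases h2 : j' = p.1 <;>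
          simp [h1, h2, Polynomial.coeff_monomial, Prod.ext_iff, eq_comm] <;> tauto
      rw [this, Finset.sum_ite_eq, if_pos hp]
    rw [hzero p.2] at hcoeff
    simpa using hcoeff.symm
  · apply le_antisymm
    · set M : Submodule Fq C :=
        { carrier := ASpan Fq C t ω
          zero_mem' := ⟨0, by simp⟩
          add_mem' := by
            rintro x y ⟨a, rfl⟩ ⟨b, rfl⟩
            exact ⟨fun i => a i + b i, by simp [add_mul, Finset.sum_add_distrib]⟩
          smul_mem' := by
            rintro c x ⟨a, rfl⟩
            refine ⟨fun i => c • a i, ?_⟩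
            simp [Finset.smul_sum, smul_mul_assoc] } with hM
      have hle : Submodule.span Fq (Set.range fun p : ℕ × Fin r => t ^ p.1 * ω p.2) ≤ M := by
        rw [Submodule.span_le]
        rintro _ ⟨p, rfl⟩
        refine ⟨fun i' => if i' = p.2 then Polynomial.X ^ p.1 else 0, ?_⟩
        simp [apply_ite (Polynomial.aeval t), ite_mul, Finset.sum_ite_eq']
      exact fun x hx => hle hx
    · rintro x ⟨a, rfl⟩
      have := hmem Set.univ a (fun _ _ _ => Set.mem_univ _)
      rwa [Set.image_univ] at this
  · rintro p x ⟨a, rfl⟩ hx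
    by_cases hall : ∀ (i' : Fin r) (j' : ℕ), (a i').coeff j' ≠ 0 →
        (‖t ^ j' * ω i'‖ < ‖t ^ p.1 * ω p.2‖ ∨
          (‖t ^ j' * ω i'‖ = ‖t ^ p.1 * ω p.2‖ ∧ p.2 < i'))
    · exact absurd (hmem _ a fun i j h => hall i j h) hx
    · push_neg at hall
      obtain ⟨i', j', hc, hns⟩ := hall
      have h1 : ‖t ^ p.1 * ω p.2‖ ≤ ‖t ^ j' * ω i'‖ := hns.1
      have h2 : ‖t ^ j' * ω i'‖ ≤ ‖Polynomial.aeval t (a i') * ω i'‖ := by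
        rw [norm_mul, norm_mul, htpow]
        exact mul_le_mul_of_nonneg_right (hlow _ _ hc) (norm_nonneg _)
      exact h1.trans (h2.trans (hmax a i'))
end
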